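/- arXiv:1408.2488 — 2 statements merged into one kernel-verified Lean document; each statement's English description precedes it below -/
import Mathlib

section
/- Let k ⊆ ℂ be a subfield, and let α ∈ ℂ be transcendental over k. Then for any β ∈ ℂ transcendental over k, there exists an automorphism σ of ℂ fixing k pointwise with σ(α) = β. -/
/-!
Extend `{α}` and `{β}` to transcendence bases `s ∋ α` and `t ∋ β` of `ℂ` over `k`. They have the
same cardinality, so some bijection `s ≃ t` sends `α` to `β`; it induces a `k`-isomorphism between
the polynomial algebras `k[s] ≅ k[t]`, which extends to their common algebraic closure `ℂ`.
-/

theorem Transcendental.exists_isTranscendenceBasis_mem {R A : Type*} [CommRing R] [CommRing A]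
    [Algebra R A] {a : A} (ha : Transcendental R a) :
    ∃ s : Set A, a ∈ s ∧ IsTranscendenceBasis R ((↑) : s → A) := by
  obtain ⟨s, has, hs⟩ := exists_isTranscendenceBasis_superset
    ((algebraicIndependent_singleton_iff (x := ((↑) : ({a} : Set A) → A)) ⟨a, rfl⟩).2 ha)
  exact ⟨s, has rfl, hs⟩

theorem Equiv.exists_apply_eq {α β : Type*} (e : α ≃ β) (a : α) (b : β) :
    ∃ e' : α ≃ β, e' a = b := by
  classical
  exact ⟨e.trans (Equiv.swap (e a) b), by simp⟩

theorem IsTranscendenceBasis.exists_algEquiv_apply_eq {R K L ι : Type*} [CommRing R]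
    [Field K] [Field L] [Algebra R K] [Algebra R L] [IsAlgClosed K] [IsAlgClosed L]
    {x : ι → K} {y : ι → L} (hx : IsTranscendenceBasis R x) (hy : IsTranscendenceBasis R y) :
    ∃ σ : K ≃ₐ[R] L, ∀ i, σ (x i) = y i := by
  let _ := IsAlgClosed.isAlgClosure_of_transcendence_basis x hx
  let _ := IsAlgClosed.isAlgClosure_of_transcendence_basis y hy
  let φ := hx.1.aevalEquiv.symm.trans hy.1.aevalEquiv
  refine ⟨AlgEquiv.ofRingEquiv (f := IsAlgClosure.equivOfEquiv K L φ.toRingEquiv) fun r => ?_,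
    fun i => ?_⟩
  · rw [IsScalarTower.algebraMap_apply R (Algebra.adjoin R (Set.range x)) K,
      IsAlgClosure.equivOfEquiv_algebraMap, AlgEquiv.coe_ringEquiv, AlgEquiv.commutes,
      ← IsScalarTower.algebraMap_apply]
  · have hxi := hx.1.algebraMap_aevalEquiv (MvPolynomial.X i)
    have hyi := hy.1.algebraMap_aevalEquiv (MvPolynomial.X i)
    rw [MvPolynomial.aeval_X] at hxi hyi
    rw [AlgEquiv.ofRingEquiv_apply, ← hxi, IsAlgClosure.equivOfEquiv_algebraMap,
      AlgEquiv.coe_ringEquiv, ← hyi]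
    simp [φ]

/-- If `α, β ∈ ℂ` are both transcendental over a subfield `k ⊆ ℂ`, then there is a
field automorphism of `ℂ` fixing `k` pointwise and sending `α` to `β`. -/
theorem stmt_3 (k : Subfield ℂ) (α β : ℂ)
    (hα : Transcendental k α) (hβ : Transcendental k β) :
    ∃ σ : ℂ ≃+* ℂ, (∀ a ∈ k, σ a = a) ∧ σ α = β := by
  obtain ⟨s, hαs, hs⟩ := hα.exists_isTranscendenceBasis_mem
  obtain ⟨t, hβt, ht⟩ := hβ.exists_isTranscendenceBasis_mem
  obtain ⟨e, he⟩ := (Cardinal.eq.1 (hs.cardinalMk_eq ht)).some.exists_apply_eq ⟨α, hαs⟩ ⟨β, hβt⟩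
  obtain ⟨σ, hσ⟩ := hs.exists_algEquiv_apply_eq (ht.comp_equiv e)
  refine ⟨σ.toRingEquiv, fun a ha => σ.commutes ⟨a, ha⟩, ?_⟩
  simpa [he] using hσ ⟨α, hαs⟩
end

section
/- Let k ⊆ ℂ be a countable subfield, A a finitely generated k-algebra which is an integral domain, with field of fractions K. Then the set of points of the associated complex affine variety that are images of a fixed generic point α (corresponding to an injective k-algebra homomorphism) under automorphisms of ℂ over k equals the complement in the variety of the union of all proper closed subvarieties defined over k. -/
/-!
Both sides consist of the points `β` whose ideal of `k`-polynomial relations is exactly `𝔭`.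
For the conjugates of `α`: two embeddings of the countable domain `k[x]/𝔭` into `ℂ` differ by
an automorphism of `ℂ`, because `ℂ` is an algebraic closure of the subring generated by a
transcendence basis over the image, and all such bases have the cardinality of the continuum.
For the complement: if the relation ideal of `β ∈ V(𝔭)` were larger than `𝔭`, it would cut out
a proper `k`-subvariety through `β`, since the generic point `α` does not lie on it.
-/

open Cardinal

/-- The zero locus in `ℂⁿ` of a set of polynomials with coefficients in a
subfield `k ⊆ ℂ`. -/
def zeroLocus (k : Subfield ℂ) (n : ℕ) (I : Set (MvPolynomial (Fin n) k)) :
    Set (Fin n → ℂ) :=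
  {z | ∀ f ∈ I, MvPolynomial.aeval z f = 0}

instance MvPolynomial.instCountable {σ R : Type*} [CommSemiring R] [Countable σ] [Countable R] :
    Countable (MvPolynomial σ R) :=
  AddMonoidAlgebra.coeffEquiv.injective.countable

universe u v

theorem IsAlgClosed.nonempty_algEquiv_of_countable {R : Type u} {K L : Type v} [CommRing R]
    [Countable R] [Field K] [Field L] [Algebra R K] [Algebra R L] [FaithfulSMul R K]
    [FaithfulSMul R L] [IsAlgClosed K] [IsAlgClosed L] (hK : ℵ₀ < #K) (hKL : #K = #L) :
    Nonempty (K ≃ₐ[R] L) := by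
  have := RingHom.domain_nontrivial (algebraMap R K)
  obtain ⟨s, hs⟩ := exists_isTranscendenceBasis R K
  obtain ⟨t, ht⟩ := exists_isTranscendenceBasis R L
  have hR : #R ≤ ℵ₀ := mk_le_aleph0
  have hKs := cardinal_eq_cardinal_transcendence_basis_of_aleph0_lt _ hs hR hK
  have hLt := cardinal_eq_cardinal_transcendence_basis_of_aleph0_lt _ ht hR (hKL ▸ hK)
  obtain ⟨e⟩ := Cardinal.eq.1 (lift_inj.1 (hKs.symm.trans (hKL ▸ hLt)))
  let := isAlgClosure_of_transcendence_basis _ hs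
  let := isAlgClosure_of_transcendence_basis _ ht
  let e' : Algebra.adjoin R (Set.range ((↑) : s → K)) ≃ₐ[R]
      Algebra.adjoin R (Set.range ((↑) : t → L)) :=
    (hs.1.aevalEquiv.symm.trans (MvPolynomial.renameEquiv R e)).trans ht.1.aevalEquiv
  refine ⟨AlgEquiv.ofRingEquiv (f := IsAlgClosure.equivOfEquiv K L e'.toRingEquiv)
    fun x => ?_⟩
  rw [IsScalarTower.algebraMap_apply R (Algebra.adjoin R (Set.range ((↑) : s → K))) K,
    IsAlgClosure.equivOfEquiv_algebraMap]
  exact congrArg (algebraMap _ L) (e'.commutes x)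

theorem IsAlgClosed.exists_ringEquiv_comp_eq_of_injective {R : Type u} {K L : Type v}
    [CommRing R] [Countable R] [Field K] [Field L] [IsAlgClosed K] [IsAlgClosed L]
    (hK : ℵ₀ < #K) (hKL : #K = #L) (i : R →+* K) (j : R →+* L) (hi : Function.Injective i)
    (hj : Function.Injective j) : ∃ σ : K ≃+* L, ∀ x, σ (i x) = j x := by
  let := i.toAlgebra
  let := j.toAlgebra
  have := (faithfulSMul_iff_algebraMap_injective R K).2 hi
  have := (faithfulSMul_iff_algebraMap_injective R L).2 hj
  obtain ⟨σ⟩ := nonempty_algEquiv_of_countable (R := R) hK hKL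
  exact ⟨σ, σ.commutes⟩

theorem IsAlgClosed.exists_ringEquiv_comp_eq_of_ker_eq {R : Type u} {K : Type v} [CommRing R]
    [Countable R] [Field K] [IsAlgClosed K] (hK : ℵ₀ < #K) (f g : R →+* K)
    (hfg : RingHom.ker f = RingHom.ker g) : ∃ σ : K ≃+* K, ∀ x, σ (f x) = g x := by
  let g' : R ⧸ RingHom.ker f →+* K := Ideal.Quotient.lift _ g fun x hx => by rwa [hfg] at hx
  have hg' : Function.Injective g' := by
    rw [injective_iff_map_eq_zero]
    rintro ⟨x⟩ hx
    exact Ideal.Quotient.eq_zero_iff_mem.2 (by rwa [hfg])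
  have : Countable (R ⧸ RingHom.ker f) := Ideal.Quotient.mk_surjective.countable
  obtain ⟨σ, hσ⟩ := exists_ringEquiv_comp_eq_of_injective hK rfl f.kerLift g'
    f.kerLift_injective hg'
  exact ⟨σ, fun x => hσ (Ideal.Quotient.mk _ x)⟩

section Conjugates

open MvPolynomial

variable {K : Type*} [Field K] {k : Subfield K} {ι : Type*}

theorem aeval_ringEquiv_apply (σ : K ≃+* K) (hσ : ∀ a ∈ k, σ a = a) (z : ι → K)
    (f : MvPolynomial ι k) : aeval (fun i => σ (z i)) f = σ (aeval z f) :=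
  let τ : K ≃ₐ[k] K := AlgEquiv.ofRingEquiv (f := σ) fun a => hσ _ a.2
  (AlgHom.congr_fun (comp_aeval z τ.toAlgHom) f).symm

theorem ker_aeval_ringEquiv (σ : K ≃+* K) (hσ : ∀ a ∈ k, σ a = a) (z : ι → K) :
    RingHom.ker (aeval (fun i => σ (z i)) : MvPolynomial ι k →ₐ[k] K) =
      RingHom.ker (aeval z : MvPolynomial ι k →ₐ[k] K) := by
  ext f
  simp only [RingHom.mem_ker, aeval_ringEquiv_apply σ hσ, map_eq_zero_iff _ σ.injective]

theorem exists_ringEquiv_symm_comp_eq_iff_ker_eq [IsAlgClosed K] (hK : ℵ₀ < #K) [Countable k]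
    [Countable ι] (α β : ι → K) :
    (∃ σ : K ≃+* K, (∀ a ∈ k, σ a = a) ∧ β = fun i => σ.symm (α i)) ↔
      RingHom.ker (aeval β : MvPolynomial ι k →ₐ[k] K) =
        RingHom.ker (aeval α : MvPolynomial ι k →ₐ[k] K) := by
  constructor
  · rintro ⟨σ, hσ, rfl⟩
    refine ker_aeval_ringEquiv σ.symm (fun a ha => ?_) α
    rw [RingEquiv.symm_apply_eq, hσ a ha]
  · intro h
    obtain ⟨σ, hσ⟩ := IsAlgClosed.exists_ringEquiv_comp_eq_of_ker_eq hK
      (aeval β : MvPolynomial ι k →ₐ[k] K).toRingHom (aeval α).toRingHom h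
    refine ⟨σ, fun a ha => ?_, funext fun i => ?_⟩
    · have h := hσ (C ⟨a, ha⟩)
      simp only [AlgHom.toRingHom_eq_coe, RingHom.coe_coe, aeval_C] at h
      exact h
    · rw [RingEquiv.eq_symm_apply]
      simpa using hσ (X i)

end Conjugates

section ZeroLocus

variable {k : Subfield ℂ} {n : ℕ}

theorem mem_zeroLocus_iff {I : Set (MvPolynomial (Fin n) k)} {z : Fin n → ℂ} :
    z ∈ zeroLocus k n I ↔
      I ⊆ RingHom.ker (MvPolynomial.aeval z : MvPolynomial (Fin n) k →ₐ[k] ℂ) :=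
  Iff.rfl

theorem mem_zeroLocus_diff_iff_ker_eq {𝔭 : Ideal (MvPolynomial (Fin n) k)} {α : Fin n → ℂ}
    (hα : RingHom.ker (MvPolynomial.aeval α : MvPolynomial (Fin n) k →ₐ[k] ℂ) = 𝔭)
    (β : Fin n → ℂ) :
    β ∈ zeroLocus k n 𝔭 \
        ⋃ (I : Ideal (MvPolynomial (Fin n) k))
          (_ : 𝔭 ≤ I) (_ : zeroLocus k n I ≠ zeroLocus k n 𝔭), zeroLocus k n I ↔
      RingHom.ker (MvPolynomial.aeval β : MvPolynomial (Fin n) k →ₐ[k] ℂ) = 𝔭 := by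
  simp only [Set.mem_sdiff, Set.mem_iUnion, not_exists, mem_zeroLocus_iff]
  constructor
  · rintro ⟨hle, hmax⟩
    let I : Ideal (MvPolynomial (Fin n) k) := RingHom.ker (MvPolynomial.aeval β)
    have hZ : zeroLocus k n I = zeroLocus k n 𝔭 := by
      by_contra h
      exact hmax I hle h subset_rfl
    have hαZ : α ∈ zeroLocus k n I := hZ ▸ hα.ge
    exact le_antisymm (hα ▸ hαZ) hle
  · intro hβ
    refine ⟨hβ.ge, fun I hle hne hI => hne ?_⟩
    rw [le_antisymm (hβ ▸ hI) hle]

end ZeroLocus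

theorem stmt_7_general (k : Subfield ℂ) [Countable k] (n : ℕ)
    (𝔭 : Ideal (MvPolynomial (Fin n) k))
    (α : Fin n → ℂ) (hα : α ∈ zeroLocus k n 𝔭)
    (hgen : ∀ f : MvPolynomial (Fin n) k, MvPolynomial.aeval α f = 0 → f ∈ 𝔭) :
    {β : Fin n → ℂ | ∃ σ : ℂ ≃+* ℂ, (∀ a ∈ k, σ a = a) ∧ β = fun i => σ.symm (α i)} =
      zeroLocus k n 𝔭 \
        ⋃ (I : Ideal (MvPolynomial (Fin n) k))
          (_ : 𝔭 ≤ I) (_ : zeroLocus k n I ≠ zeroLocus k n 𝔭),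
            zeroLocus k n I := by
  have hker : RingHom.ker (MvPolynomial.aeval α : MvPolynomial (Fin n) k →ₐ[k] ℂ) = 𝔭 :=
    le_antisymm hgen hα
  have hℂ : ℵ₀ < #ℂ := mk_complex ▸ aleph0_lt_continuum
  ext β
  rw [Set.mem_ofPred_eq, exists_ringEquiv_symm_comp_eq_iff_ker_eq hℂ,
    mem_zeroLocus_diff_iff_ker_eq hker, hker]

/-- (Proposition 3.2.)  Let `k ⊆ ℂ` be countable, `𝔭` a prime ideal over `k`, and
`α` a `k`-generic point of `V = Z(𝔭)` (the evaluation homomorphism is injective,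
i.e. every polynomial over `k` vanishing at `α` lies in `𝔭`).  Then the set of
conjugates `α^σ = σ⁻¹ ∘ α` of `α` under automorphisms of `ℂ` over `k` equals the
complement in `V` of the union of all proper closed subvarieties of `V` defined
over `k`. -/
theorem stmt_7 (k : Subfield ℂ) [Countable k] (n : ℕ)
    (𝔭 : Ideal (MvPolynomial (Fin n) k)) (h𝔭 : 𝔭.IsPrime)
    (α : Fin n → ℂ) (hα : α ∈ zeroLocus k n 𝔭)
    (hgen : ∀ f : MvPolynomial (Fin n) k, MvPolynomial.aeval α f = 0 → f ∈ 𝔭) :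
    {β : Fin n → ℂ | ∃ σ : ℂ ≃+* ℂ, (∀ a ∈ k, σ a = a) ∧ β = fun i => σ.symm (α i)} =
      zeroLocus k n 𝔭 \
        ⋃ (I : Ideal (MvPolynomial (Fin n) k))
          (_ : 𝔭 ≤ I) (_ : zeroLocus k n I ≠ zeroLocus k n 𝔭),
            zeroLocus k n I :=
  stmt_7_general k n 𝔭 α hα hgen
end
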